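/- arXiv:2411.18102 — 3 statements merged into one kernel-verified Lean document; each statement's English description precedes it below -/
import Mathlib

section
/- Let G be a finite group and N a nontrivial proper normal subgroup of G. If D(G) - D_G(N) = m, then D(G/N) ≤ m - 1. In particular, D(G/N) ≤ D(G) - 1. -/
open Pointwise

/-- Two subgroups of `G` are conjugate. -/
def SubgroupConj {G : Type*} [Group G] (H K : Subgroup G) : Prop :=
  ∃ g : G, K = H.map (MulAut.conj g).toMonoidHom

/-- `D(G)`: the number of conjugacy classes of nontrivial subgroups of `G`
that are not self-normalizing. -/
noncomputable def DCount (G : Type*) [Group G] : ℕ :=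
  Nat.card (Quot fun (H K : {H : Subgroup G // H ≠ ⊥ ∧ Subgroup.normalizer (H : Set G) ≠ H}) =>
    SubgroupConj H.1 K.1)

/-- `D_G(N)`: the number of `G`-conjugacy classes of nontrivial, non self-normalizing
subgroups of `G` that are properly contained in `N`. -/
noncomputable def DCountIn (G : Type*) [Group G] (N : Subgroup G) : ℕ :=
  Nat.card (Quot fun (H K : {H : Subgroup G // H ≠ ⊥ ∧ Subgroup.normalizer (H : Set G) ≠ H ∧ H < N}) =>
    SubgroupConj H.1 K.1)

/-- `G` is a Frobenius group with kernel `N` and complement `H`. -/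
def IsFrobeniusWith {G : Type*} [Group G] (N H : Subgroup G) : Prop :=
  H ≠ ⊥ ∧ H ≠ ⊤ ∧
    (∀ g : G, g ∉ H → H ⊓ H.map (MulAut.conj g).toMonoidHom = ⊥) ∧
    (∀ x : G, x ∈ N ↔ ∀ g : G, g * x * g⁻¹ ∈ H → x = 1)

/-- A subgroup is elementary abelian for the prime `p`. -/
def IsElementaryAbelianSubgroup {G : Type*} [Group G] (p : ℕ) (N : Subgroup G) : Prop :=
  (∀ x ∈ N, x ^ p = 1) ∧ ∀ x ∈ N, ∀ y ∈ N, x * y = y * x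

/-- The derived length of a group: the least `n` with `derivedSeries G n = ⊥`. -/
noncomputable def derivedLength (G : Type*) [Group G] : ℕ :=
  sInf {n | derivedSeries G n = ⊥}

/-- The nilpotency class of a group: the least `n` with `lowerCentralSeries G n = ⊥`. -/
noncomputable def nilClass (G : Type*) [Group G] : ℕ :=
  sInf {n | (⊤ : Subgroup G).lowerCentralSeries n = ⊥}

/-!
Taking preimages under `G → G ⧸ N` is injective on subgroups, commutes with conjugation and with
normalizers, so the classes counted by `D(G/N)` inject into the classes of non-self-normalizing
subgroups of `G` strictly containing `N`. The classes counted by `D_G(N)` lie strictly inside `N`,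
and `N` itself, being normal and proper, is one more non-self-normalizing class. Conjugation
preserves containment in the normal subgroup `N`, so these three families of classes are disjoint,
whence `D(G/N) + D_G(N) + 1 ≤ D(G)`.
-/

namespace SubgroupConj

variable {G : Type*} [Group G]

lemma mem_map_conj {H : Subgroup G} {g x : G} :
    x ∈ H.map (MulAut.conj g).toMonoidHom ↔ g⁻¹ * x * g ∈ H := by
  rw [Subgroup.mem_map_equiv, MulAut.conj_symm_apply]

lemma equivalence : Equivalence (SubgroupConj (G := G)) where
  refl H := ⟨1, by ext x; simp⟩
  symm := by
    rintro H K ⟨g, rfl⟩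
    exact ⟨g⁻¹, by ext x; simp only [mem_map_conj]; group⟩
  trans := by
    rintro H K L ⟨g, rfl⟩ ⟨g', rfl⟩
    exact ⟨g' * g, by ext x; simp only [mem_map_conj]; group⟩

lemma le_of_le_normal {H K N : Subgroup G} [N.Normal] (hHK : SubgroupConj H K) (hH : H ≤ N) :
    K ≤ N := by
  obtain ⟨g, rfl⟩ := hHK
  exact Subgroup.Normal.map_conj_eq N g ▸ Subgroup.map_mono hH

lemma eq_of_normal {K N : Subgroup G} [N.Normal] (hNK : SubgroupConj N K) : K = N := by
  obtain ⟨g, rfl⟩ := hNK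
  exact Subgroup.Normal.map_conj_eq N g

lemma comap_map_conj {Q : Type*} [Group Q] (φ : G →* Q) (H : Subgroup Q) (g : G) :
    (H.comap φ).map (MulAut.conj g).toMonoidHom
      = (H.map (MulAut.conj (φ g)).toMonoidHom).comap φ := by
  ext x
  simp only [Subgroup.mem_comap, mem_map_conj]
  simp

lemma comap_iff {Q : Type*} [Group Q] {φ : G →* Q} (hφ : Function.Surjective φ)
    {H K : Subgroup Q} : SubgroupConj (H.comap φ) (K.comap φ) ↔ SubgroupConj H K := by
  constructor
  · rintro ⟨g, hg⟩
    rw [comap_map_conj] at hg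
    exact ⟨φ g, Subgroup.comap_injective hφ hg⟩
  · rintro ⟨q, rfl⟩
    obtain ⟨g, rfl⟩ := hφ q
    exact ⟨g, (comap_map_conj φ H g).symm⟩

end SubgroupConj

section Counting

variable {G : Type*} [Group G]

/-- `DCount G` and `DCountIn G N` are, definitionally, this count for their predicates. -/
noncomputable def subgroupConjClassCount (G : Type*) [Group G] (P : Subgroup G → Prop) : ℕ :=
  Nat.card (Quot (InvImage SubgroupConj (Subtype.val : {H : Subgroup G // P H} → Subgroup G)))

lemma subgroupConjClasses_map_injective {G' : Type*} [Group G'] {P' : Subgroup G' → Prop}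
    {P : Subgroup G → Prop} (f : {H // P' H} → {H // P H})
    (hf : ∀ H K, SubgroupConj (f H).1 (f K).1 ↔ SubgroupConj H.1 K.1) :
    Function.Injective (Quot.map (ra := InvImage SubgroupConj Subtype.val)
      (rb := InvImage SubgroupConj Subtype.val) f fun H K => (hf H K).2) := by
  rintro ⟨H⟩ ⟨K⟩ h
  have hHK := (SubgroupConj.equivalence.comap _).eqvGen_iff.mp (Quot.eq.mp h)
  exact Quot.sound ((hf H K).1 hHK)

variable [Finite G]

lemma subgroupConjClassCount_le {G' : Type*} [Group G'] {P' : Subgroup G' → Prop}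
    {P : Subgroup G → Prop} (f : {H // P' H} → {H // P H})
    (hf : ∀ H K, SubgroupConj (f H).1 (f K).1 ↔ SubgroupConj H.1 K.1) :
    subgroupConjClassCount G' P' ≤ subgroupConjClassCount G P :=
  Nat.card_le_card_of_injective _ (subgroupConjClasses_map_injective f hf)

lemma subgroupConjClassCount_add_le {P Q R : Subgroup G → Prop}
    (hPR : ∀ H, P H → R H) (hQR : ∀ H, Q H → R H)
    (hPQ : ∀ H K, P H → Q K → ¬ SubgroupConj H K) :
    subgroupConjClassCount G P + subgroupConjClassCount G Q ≤ subgroupConjClassCount G R := by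
  let inclP : {H // P H} → {H // R H} := fun H => ⟨H.1, hPR H.1 H.2⟩
  let inclQ : {H // Q H} → {H // R H} := fun H => ⟨H.1, hQR H.1 H.2⟩
  have hinj := (subgroupConjClasses_map_injective inclP fun _ _ => Iff.rfl).sumElim
    (subgroupConjClasses_map_injective inclQ fun _ _ => Iff.rfl) ?_
  · simpa only [subgroupConjClassCount, Nat.card_sum] using Nat.card_le_card_of_injective _ hinj
  · rintro ⟨H⟩ ⟨K⟩ h
    exact hPQ H.1 K.1 H.2 K.2
      ((SubgroupConj.equivalence.comap _).eqvGen_iff.mp (Quot.eq.mp h))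

lemma one_le_subgroupConjClassCount {P : Subgroup G → Prop} {H : Subgroup G} (hH : P H) :
    1 ≤ subgroupConjClassCount G P :=
  Nat.card_pos_iff.mpr ⟨⟨Quot.mk _ ⟨H, hH⟩⟩, inferInstance⟩

end Counting

section Quotient

variable {G Q : Type*} [Group G] [Group Q] [Finite G]

lemma subgroupConjClassCount_le_comap {φ : G →* Q} (hφ : Function.Surjective φ) :
    DCount Q ≤
      subgroupConjClassCount G (fun H => φ.ker < H ∧ Subgroup.normalizer (H : Set G) ≠ H) := by
  refine subgroupConjClassCount_le (fun H => ⟨H.1.comap φ, ?_, ?_⟩)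
    fun _ _ => SubgroupConj.comap_iff hφ
  · rw [← MonoidHom.comap_bot, Subgroup.comap_lt_comap_of_surjective hφ]
    exact bot_lt_iff_ne_bot.mpr H.2.1
  · rw [← Subgroup.comap_normalizer_eq_of_surjective _ hφ]
    exact fun h => H.2.2 (Subgroup.comap_injective hφ h)

end Quotient

section Normal

variable {G : Type*} [Group G] [Finite G] (N : Subgroup G) [N.Normal]

lemma dCountIn_add_one_le (h1 : N ≠ ⊥) (h2 : N ≠ ⊤) :
    DCountIn G N + 1 ≤
      subgroupConjClassCount G (fun H => H ≤ N ∧ H ≠ ⊥ ∧ Subgroup.normalizer (H : Set G) ≠ H) := by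
  have hN : Subgroup.normalizer (N : Set G) ≠ N := by
    rw [Subgroup.normalizer_eq_top_iff.mpr ‹_›]
    exact h2.symm
  refine le_trans (Nat.add_le_add_left (one_le_subgroupConjClassCount (P := (· = N)) rfl) _)
    (subgroupConjClassCount_add_le (fun H hH => ⟨hH.2.2.le, hH.1, hH.2.1⟩)
      (by rintro H rfl; exact ⟨le_rfl, h1, hN⟩) ?_)
  rintro H K ⟨-, -, hHN⟩ rfl hHK
  exact hHN.ne (SubgroupConj.eq_of_normal (SubgroupConj.equivalence.symm hHK))

lemma subgroupConjClassCount_above_add_below_le :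
    subgroupConjClassCount G (fun H => N < H ∧ Subgroup.normalizer (H : Set G) ≠ H) +
      subgroupConjClassCount G (fun H => H ≤ N ∧ H ≠ ⊥ ∧ Subgroup.normalizer (H : Set G) ≠ H) ≤
      DCount G :=
  subgroupConjClassCount_add_le (fun _ hH => ⟨(bot_le.trans_lt hH.1).ne', hH.2⟩)
    (fun _ hH => hH.2) fun _ _ hH hK hHK =>
      hH.1.not_ge (SubgroupConj.le_of_le_normal (SubgroupConj.equivalence.symm hHK) hK.1)

lemma dCount_quotient_add_dCountIn_lt (h1 : N ≠ ⊥) (h2 : N ≠ ⊤) :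
    DCount (G ⧸ N) + DCountIn G N < DCount G := by
  have hquot := subgroupConjClassCount_le_comap (QuotientGroup.mk'_surjective N)
  rw [QuotientGroup.ker_mk'] at hquot
  have hbelow := dCountIn_add_one_le N h1 h2
  have hsplit := subgroupConjClassCount_above_add_below_le N
  omega

end Normal

theorem stmt3 (G : Type*) [Group G] [Finite G] (N : Subgroup G) [N.Normal]
    (h1 : N ≠ ⊥) (h2 : N ≠ ⊤) (m : ℕ) (hm : DCount G - DCountIn G N = m) :
    DCount (G ⧸ N) ≤ m - 1 ∧ DCount (G ⧸ N) ≤ DCount G - 1 := by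
  have := dCount_quotient_add_dCountIn_lt N h1 h2
  omega
end

section
/- Let G = H × K be a direct product of two nontrivial finite groups. Then D(G) ≥ (D(H) + 2)(D(K) + 2) - 2, and equality holds if and only if H and K have coprime orders and both H and K are nilpotent. -/
open Pointwise

namespace Stmt7Aux

variable {G : Type*} [Group G]

/-- conjugate of a subgroup -/
def cmap (g : G) (A : Subgroup G) : Subgroup G := A.map (MulAut.conj g).toMonoidHom

lemma mem_cmap {g x : G} {A : Subgroup G} : x ∈ cmap g A ↔ g⁻¹ * x * g ∈ A := by
  rw [cmap, Subgroup.mem_map_equiv, MulAut.conj_symm_apply]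

lemma subgroupConj_iff {A B : Subgroup G} : SubgroupConj A B ↔ ∃ g : G, B = cmap g A :=
  Iff.rfl

lemma cmap_cmap (g h : G) (A : Subgroup G) : cmap g (cmap h A) = cmap (g * h) A := by
  ext x; simp [mem_cmap, mul_assoc]

lemma cmap_one (A : Subgroup G) : cmap (1 : G) A = A := by
  ext x; simp [mem_cmap]

lemma conj_refl (A : Subgroup G) : SubgroupConj A A := ⟨1, (cmap_one A).symm⟩

lemma conj_symm {A B : Subgroup G} (h : SubgroupConj A B) : SubgroupConj B A := by
  rw [subgroupConj_iff] at h ⊢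
  obtain ⟨g, rfl⟩ := h
  exact ⟨g⁻¹, by rw [cmap_cmap, inv_mul_cancel, cmap_one]⟩

lemma conj_trans {A B C : Subgroup G} (h1 : SubgroupConj A B) (h2 : SubgroupConj B C) :
    SubgroupConj A C := by
  rw [subgroupConj_iff] at h1 h2 ⊢
  obtain ⟨g, rfl⟩ := h1; obtain ⟨g', rfl⟩ := h2
  exact ⟨g' * g, (cmap_cmap g' g A)⟩

lemma cmap_inj {g : G} {A B : Subgroup G} (h : cmap g A = cmap g B) : A = B := by
  have := congrArg (cmap g⁻¹) h
  rwa [cmap_cmap, cmap_cmap, inv_mul_cancel, cmap_one, cmap_one] at this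

lemma cmap_bot (g : G) : cmap g (⊥ : Subgroup G) = ⊥ := by
  ext x
  rw [mem_cmap, Subgroup.mem_bot, Subgroup.mem_bot]
  constructor
  · intro h
    have := congrArg (fun z => g * z * g⁻¹) h
    simpa [mul_assoc] using this
  · rintro rfl; simp

lemma cmap_top (g : G) : cmap g (⊤ : Subgroup G) = ⊤ := by
  ext x; simp [mem_cmap]

lemma cmap_eq_bot_iff {g : G} {A : Subgroup G} : cmap g A = ⊥ ↔ A = ⊥ :=
  ⟨fun h => cmap_inj (g := g) (by rw [h, cmap_bot]), fun h => by rw [h, cmap_bot]⟩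

lemma normalizer_cmap (g : G) (A : Subgroup G) :
    (Subgroup.normalizer ((cmap g A) : Set _)) = cmap g (Subgroup.normalizer (A : Set _)) :=
  (Subgroup.map_equiv_normalizer_eq A (MulAut.conj g)).symm

lemma selfnorm_cmap_iff {g : G} {A : Subgroup G} :
    (Subgroup.normalizer ((cmap g A) : Set _)) = cmap g A ↔ (Subgroup.normalizer (A : Set _)) = A := by
  rw [normalizer_cmap]
  exact ⟨fun h => cmap_inj h, fun h => by rw [h]⟩

/-- the setoid of conjugacy on subgroups satisfying `p` -/
def S (p : Subgroup G → Prop) : Setoid {A : Subgroup G // p A} :=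
  ⟨fun A B => SubgroupConj A.1 B.1,
    ⟨fun A => conj_refl A.1, conj_symm, conj_trans⟩⟩

/-- number of conjugacy classes of subgroups satisfying `p` -/
noncomputable def csr (G : Type*) [Group G] (p : Subgroup G → Prop) : ℕ :=
  Nat.card (Quotient (S p))

lemma dcount_eq_csr (G : Type*) [Group G] :
    DCount G = csr G (fun A => A ≠ ⊥ ∧ (Subgroup.normalizer (A : Set _)) ≠ A) := rfl

lemma csr_congr {p q : Subgroup G → Prop} (h : ∀ A, p A ↔ q A) : csr G p = csr G q := by
  have : p = q := funext fun A => propext (h A)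
  subst this; rfl

variable [Finite G]

instance (p : Subgroup G → Prop) : Finite (Quotient (S p)) := Quotient.finite _

lemma csr_split (p q : Subgroup G → Prop) (hq : ∀ (g : G) A, q A → q (cmap g A)) :
    csr G p = csr G (fun A => p A ∧ q A) + csr G (fun A => p A ∧ ¬ q A) := by
  classical
  have hinv : ∀ {A B : Subgroup G}, SubgroupConj A B → (q A ↔ q B) := by
    rintro A B h
    rw [subgroupConj_iff] at h
    obtain ⟨g, rfl⟩ := h
    exact ⟨hq g A, fun hB => by
      have := hq g⁻¹ _ hB
      rwa [cmap_cmap, inv_mul_cancel, cmap_one] at this⟩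
  let e : Quotient (S (fun A : Subgroup G => p A ∧ q A)) ⊕
      Quotient (S (fun A : Subgroup G => p A ∧ ¬ q A)) ≃ Quotient (S p) :=
    { toFun := Sum.elim
        (Quotient.map' (fun A => ⟨A.1, A.2.1⟩) (fun _ _ h => h))
        (Quotient.map' (fun A => ⟨A.1, A.2.1⟩) (fun _ _ h => h))
      invFun := fun x => Quotient.liftOn' x
        (fun A => if h : q A.1 then Sum.inl (Quotient.mk'' ⟨A.1, A.2, h⟩)
          else Sum.inr (Quotient.mk'' ⟨A.1, A.2, h⟩))
        (by
          intro A B hAB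
          by_cases h : q A.1
          · rw [dif_pos h, dif_pos ((hinv hAB).1 h)]
            exact congrArg _ (Quotient.sound' hAB)
          · rw [dif_neg h, dif_neg (fun hB => h ((hinv hAB).2 hB))]
            exact congrArg _ (Quotient.sound' hAB))
      left_inv := by
        rintro (x | x) <;> refine Quotient.inductionOn' x fun A => ?_ <;>
          simp only [Sum.elim_inl, Sum.elim_inr] <;>
          [exact dif_pos A.2.2; exact dif_neg A.2.2]
      right_inv := by
        intro x
        refine Quotient.inductionOn' x fun A => ?_
        simp only [Quotient.liftOn'_mk'']
        by_cases h : q A.1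
        · rw [dif_pos h]; rfl
        · rw [dif_neg h]; rfl }
  rw [csr, ← Nat.card_congr e, Nat.card_sum]; rfl

lemma csr_singleton {p : Subgroup G → Prop} (c : Subgroup G) (h : ∀ A, p A ↔ A = c) :
    csr G p = 1 := by
  have : Unique {A : Subgroup G // p A} :=
    { default := ⟨c, (h c).2 rfl⟩
      uniq := fun A => Subtype.ext ((h A.1).1 A.2) }
  rw [csr, Nat.card_eq_one_iff_unique]
  constructor
  · constructor
    intro a b
    induction a using Quotient.inductionOn' with
    | h A => induction b using Quotient.inductionOn' with
      | h B => exact congrArg _ (Subsingleton.elim A B)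
  · exact ⟨Quotient.mk'' default⟩

lemma csr_eq_zero {p : Subgroup G → Prop} (h : ∀ A, ¬ p A) : csr G p = 0 := by
  have : IsEmpty {A : Subgroup G // p A} := ⟨fun A => h A.1 A.2⟩
  have : IsEmpty (Quotient (S p)) := ⟨fun x => Quotient.inductionOn' x fun A => this.false A⟩
  exact Nat.card_of_isEmpty

lemma one_le_csr {p : Subgroup G → Prop} (h : ∃ A, p A) : 1 ≤ csr G p := by
  obtain ⟨A, hA⟩ := h
  have : Nonempty (Quotient (S p)) := ⟨Quotient.mk'' ⟨A, hA⟩⟩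
  exact Nat.card_pos

lemma eq_of_csr_eq_one {p : Subgroup G → Prop} (c : Subgroup G) (hc : p c)
    (h : csr G p = 1) : ∀ A, p A → SubgroupConj A c := by
  intro A hA
  rw [csr, Nat.card_eq_one_iff_unique] at h
  have := h.1
  have : (Quotient.mk'' ⟨A, hA⟩ : Quotient (S p)) = Quotient.mk'' ⟨c, hc⟩ :=
    Subsingleton.elim _ _
  exact Quotient.exact' this

end Stmt7Aux

namespace Stmt7Aux

section Prod

variable {H K : Type*} [Group H] [Group K]

lemma map_fst_prod (A : Subgroup H) (B : Subgroup K) :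
    (A.prod B).map (MonoidHom.fst H K) = A := by
  ext x
  simp only [Subgroup.mem_map, Subgroup.mem_prod, MonoidHom.coe_fst]
  constructor
  · rintro ⟨⟨a, b⟩, ⟨ha, _⟩, rfl⟩; exact ha
  · intro hx; exact ⟨(x, 1), ⟨hx, B.one_mem⟩, rfl⟩

lemma map_snd_prod (A : Subgroup H) (B : Subgroup K) :
    (A.prod B).map (MonoidHom.snd H K) = B := by
  ext x
  simp only [Subgroup.mem_map, Subgroup.mem_prod, MonoidHom.coe_snd]
  constructor
  · rintro ⟨⟨a, b⟩, ⟨_, hb⟩, rfl⟩; exact hb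
  · intro hx; exact ⟨(1, x), ⟨A.one_mem, hx⟩, rfl⟩

lemma prod_inj {A A' : Subgroup H} {B B' : Subgroup K} (h : A.prod B = A'.prod B') :
    A = A' ∧ B = B' := by
  constructor
  · rw [← map_fst_prod A B, h, map_fst_prod]
  · rw [← map_snd_prod A B, h, map_snd_prod]

lemma cmap_prod (g₁ : H) (g₂ : K) (A : Subgroup H) (B : Subgroup K) :
    cmap (g₁, g₂) (A.prod B) = (cmap g₁ A).prod (cmap g₂ B) := by
  ext ⟨x, y⟩
  simp only [mem_cmap, Subgroup.mem_prod, Prod.inv_mk, Prod.mk_mul_mk]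

lemma normalizer_prod (A : Subgroup H) (B : Subgroup K) :
    (Subgroup.normalizer ((A.prod B) : Set (H × K))) = (Subgroup.normalizer (A : Set H)).prod (Subgroup.normalizer (B : Set K)) := by
  ext ⟨g₁, g₂⟩
  simp only [Subgroup.mem_normalizer_iff, Subgroup.mem_prod]
  constructor
  · intro h
    constructor
    · intro a
      have := h (a, 1)
      simpa [Subgroup.mem_prod, B.one_mem] using ⟨fun ha => (this.1 ⟨ha, B.one_mem⟩).1,
        fun ha => (this.2 ⟨by simpa using ha, by simpa using B.one_mem⟩).1⟩
    · intro b
      have := h (1, b)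
      exact ⟨fun hb => (this.1 ⟨A.one_mem, hb⟩).2,
        fun hb => (this.2 ⟨by simpa using A.one_mem, by simpa using hb⟩).2⟩
  · rintro ⟨h₁, h₂⟩ ⟨a, b⟩
    exact ⟨fun ⟨ha, hb⟩ => ⟨(h₁ a).1 ha, (h₂ b).1 hb⟩,
      fun ⟨ha, hb⟩ => ⟨(h₁ a).2 ha, (h₂ b).2 hb⟩⟩

lemma selfnorm_prod_iff {A : Subgroup H} {B : Subgroup K} :
    (Subgroup.normalizer ((A.prod B) : Set _)) = A.prod B ↔ (Subgroup.normalizer (A : Set _)) = A ∧ (Subgroup.normalizer (B : Set _)) = B := by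
  rw [normalizer_prod]
  constructor
  · exact prod_inj
  · rintro ⟨h₁, h₂⟩; rw [h₁, h₂]

lemma conj_prod_iff {A A' : Subgroup H} {B B' : Subgroup K} :
    SubgroupConj (A.prod B) (A'.prod B') ↔ SubgroupConj A A' ∧ SubgroupConj B B' := by
  rw [subgroupConj_iff, subgroupConj_iff (A := A), subgroupConj_iff (A := B)]
  constructor
  · rintro ⟨⟨g₁, g₂⟩, h⟩
    rw [cmap_prod] at h
    obtain ⟨h₁, h₂⟩ := prod_inj h
    exact ⟨⟨g₁, h₁⟩, ⟨g₂, h₂⟩⟩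
  · rintro ⟨⟨g₁, rfl⟩, ⟨g₂, rfl⟩⟩
    exact ⟨(g₁, g₂), (cmap_prod g₁ g₂ A B).symm⟩

/-- A subgroup of a product is a "product subgroup". -/
def IsProd (L : Subgroup (H × K)) : Prop :=
  L = (L.map (MonoidHom.fst H K)).prod (L.map (MonoidHom.snd H K))

lemma isProd_prod (A : Subgroup H) (B : Subgroup K) : IsProd (A.prod B) := by
  rw [IsProd, map_fst_prod, map_snd_prod]

lemma map_fst_cmap (g₁ : H) (g₂ : K) (L : Subgroup (H × K)) :
    (cmap (g₁, g₂) L).map (MonoidHom.fst H K) = cmap g₁ (L.map (MonoidHom.fst H K)) := by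
  rw [cmap, cmap, Subgroup.map_map, Subgroup.map_map]
  congr 1

lemma map_snd_cmap (g₁ : H) (g₂ : K) (L : Subgroup (H × K)) :
    (cmap (g₁, g₂) L).map (MonoidHom.snd H K) = cmap g₂ (L.map (MonoidHom.snd H K)) := by
  rw [cmap, cmap, Subgroup.map_map, Subgroup.map_map]
  congr 1

lemma isProd_cmap {L : Subgroup (H × K)} (g : H × K) (h : IsProd L) : IsProd (cmap g L) := by
  obtain ⟨g₁, g₂⟩ := g
  rw [IsProd, map_fst_cmap, map_snd_cmap, ← cmap_prod]
  exact congrArg _ h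

lemma isProd_bot : IsProd (⊥ : Subgroup (H × K)) := by
  have : (⊥ : Subgroup (H × K)) = (⊥ : Subgroup H).prod (⊥ : Subgroup K) := by
    rw [Subgroup.prod_eq_bot_iff.2 ⟨rfl, rfl⟩]
  rw [this]
  exact isProd_prod _ _

end Prod

end Stmt7Aux

namespace Stmt7Aux

section Count

variable {H K : Type*} [Group H] [Group K] [Finite H] [Finite K]

lemma csr_prod (pH : Subgroup H → Prop) (pK : Subgroup K → Prop) :
    csr (H × K) (fun L => (pH (L.map (MonoidHom.fst H K)) ∧ pK (L.map (MonoidHom.snd H K)))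
        ∧ IsProd L) = csr H pH * csr K pK := by
  set pG : Subgroup (H × K) → Prop := fun L =>
    (pH (L.map (MonoidHom.fst H K)) ∧ pK (L.map (MonoidHom.snd H K))) ∧ IsProd L with hpG
  have hmk : ∀ (A : {A : Subgroup H // pH A}) (B : {B : Subgroup K // pK B}),
      pG (A.1.prod B.1) := by
    rintro ⟨A, hA⟩ ⟨B, hB⟩
    refine ⟨⟨?_, ?_⟩, isProd_prod A B⟩
    · rwa [map_fst_prod]
    · rwa [map_snd_prod]
  let g : {A : Subgroup H // pH A} → {B : Subgroup K // pK B} → {L : Subgroup (H × K) // pG L} :=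
    fun A B => ⟨A.1.prod B.1, hmk A B⟩
  have hresp : Relator.LiftFun (S pH) (Relator.LiftFun (S pK) (S pG)) g g := by
    intro A A' hA B B' hB
    exact conj_prod_iff.2 ⟨hA, hB⟩
  let f : Quotient (S pH) × Quotient (S pK) → Quotient (S pG) := fun x =>
    Quotient.map₂' g hresp x.1 x.2
  have hbij : Function.Bijective f := by
    constructor
    · rintro ⟨x₁, x₂⟩ ⟨y₁, y₂⟩ h
      refine Quotient.inductionOn₂' x₁ x₂ (fun A B => ?_) h
      · intro h
        refine Quotient.inductionOn₂' y₁ y₂ (fun A' B' h => ?_) h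
        have := Quotient.exact' h
        have h2 : SubgroupConj A.1 A'.1 ∧ SubgroupConj B.1 B'.1 := conj_prod_iff.1 this
        exact Prod.ext (Quotient.sound' h2.1) (Quotient.sound' h2.2)
    · intro y
      refine Quotient.inductionOn' y (fun L => ?_)
      refine ⟨(Quotient.mk'' ⟨L.1.map (MonoidHom.fst H K), L.2.1.1⟩,
        Quotient.mk'' ⟨L.1.map (MonoidHom.snd H K), L.2.1.2⟩), ?_⟩
      show Quotient.mk'' _ = _
      apply congrArg
      exact Subtype.ext L.2.2.symm
  calc csr (H × K) pG = Nat.card (Quotient (S pH) × Quotient (S pK)) :=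
        (Nat.card_eq_of_bijective f hbij).symm
    _ = csr H pH * csr K pK := Nat.card_prod _ _

end Count

end Stmt7Aux

namespace Stmt7Aux

section Coprime

variable {H K : Type*} [Group H] [Group K] [Finite H] [Finite K]

lemma isProd_of_coprime (hco : Nat.Coprime (Nat.card H) (Nat.card K)) [Nontrivial H]
    (L : Subgroup (H × K)) : IsProd L := by
  have hfst : ∀ x ∈ L, ((x.1, 1) : H × K) ∈ L := by
    rintro ⟨x, y⟩ hxy
    obtain ⟨m, -, hm⟩ := Nat.exists_mul_mod_eq_one_of_coprime hco.symm
      (Finite.one_lt_card_iff_nontrivial.2 ‹Nontrivial H›)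
    -- Nat.card K * m % Nat.card H = 1
    have hdecomp : Nat.card K * m = Nat.card H * (Nat.card K * m / Nat.card H) + 1 := by
      conv_lhs => rw [← Nat.div_add_mod (Nat.card K * m) (Nat.card H)]
      rw [hm]
    have hx : x ^ (Nat.card K * m) = x := by
      rw [hdecomp, pow_add, pow_mul, pow_card_eq_one', one_pow, one_mul, pow_one]
    have hy : y ^ (Nat.card K * m) = 1 := by
      rw [mul_comm (Nat.card K) m, pow_mul', pow_card_eq_one', one_pow]
    have : ((x, y) : H × K) ^ (Nat.card K * m) ∈ L := L.pow_mem hxy _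
    rwa [Prod.pow_mk, hx, hy] at this
  have hsnd : ∀ x ∈ L, ((1, x.2) : H × K) ∈ L := by
    rintro ⟨x, y⟩ hxy
    have h1 := hfst (x, y) hxy
    have := L.mul_mem (L.inv_mem h1) hxy
    simpa using this
  rw [IsProd]
  apply le_antisymm
  · intro x hx
    rw [Subgroup.mem_prod]
    exact ⟨⟨x, hx, rfl⟩, ⟨x, hx, rfl⟩⟩
  · rintro ⟨a, b⟩ hab
    rw [Subgroup.mem_prod] at hab
    obtain ⟨⟨x, hx, hx1⟩, ⟨y, hy, hy2⟩⟩ := hab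
    have hx1' : x.1 = a := hx1
    have hy2' : y.2 = b := hy2
    have h1 : ((a, 1) : H × K) ∈ L := hx1' ▸ hfst x hx
    have h2 : ((1, b) : H × K) ∈ L := hy2' ▸ hsnd y hy
    have := L.mul_mem h1 h2
    simpa using this

lemma exists_witness_of_not_coprime (hco : ¬ Nat.Coprime (Nat.card H) (Nat.card K)) :
    ∃ L : Subgroup (H × K), L ≠ ⊥ ∧ (Subgroup.normalizer (L : Set _)) ≠ L ∧ ¬ IsProd L := by
  classical
  have := Fintype.ofFinite H
  have := Fintype.ofFinite K
  obtain ⟨p, hp, hpH, hpK⟩ := Nat.Prime.not_coprime_iff_dvd.1 hco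
  have : Fact p.Prime := ⟨hp⟩
  obtain ⟨x, hx⟩ := exists_prime_orderOf_dvd_card (G := H) p (by rwa [← Nat.card_eq_fintype_card])
  obtain ⟨y, hy⟩ := exists_prime_orderOf_dvd_card (G := K) p (by rwa [← Nat.card_eq_fintype_card])
  have hx1 : x ≠ 1 := by
    intro h
    subst h
    rw [orderOf_one] at hx
    exact hp.ne_one hx.symm
  have hy1 : y ≠ 1 := by
    intro h
    subst h
    rw [orderOf_one] at hy
    exact hp.ne_one hy.symm
  refine ⟨Subgroup.zpowers ((x, y) : H × K), ?_, ?_, ?_⟩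
  · intro h
    have : ((x, y) : H × K) ∈ Subgroup.zpowers ((x, y) : H × K) := Subgroup.mem_zpowers _
    rw [h, Subgroup.mem_bot] at this
    exact hx1 (congrArg Prod.fst this)
  · -- (x, 1) is in the normalizer but not in the subgroup
    intro h
    have hcomm : Commute ((x, 1) : H × K) ((x, y) : H × K) := by
      show ((x, 1) : H × K) * (x, y) = (x, y) * (x, 1)
      simp [Prod.ext_iff]
    have hmem : ((x, 1) : H × K) ∈ (Subgroup.normalizer ((Subgroup.zpowers ((x, y) : H × K)) : Set _)) := by
      rw [Subgroup.mem_normalizer_iff]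
      intro n
      constructor
      · rintro hn
        obtain ⟨k, rfl⟩ := hn
        rw [(hcomm.zpow_right k).eq, mul_assoc, mul_inv_cancel, mul_one]
        exact Subgroup.mem_zpowers_iff.2 ⟨k, rfl⟩
      · intro hn
        obtain ⟨k, hk⟩ := hn
        have hk' : ((x, y) : H × K) ^ k = (x, 1) * n * (x, 1)⁻¹ := hk
        have hfix : ((x, 1) : H × K)⁻¹ * (((x, y) : H × K) ^ k) * (x, 1) = ((x, y) : H × K) ^ k := by
          rw [(hcomm.zpow_right k).inv_left.eq, mul_assoc, inv_mul_cancel, mul_one]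
        have hn' : n = ((x, y) : H × K) ^ k := by
          rw [← hfix, hk']
          group
        rw [hn']
        exact Subgroup.mem_zpowers_iff.2 ⟨k, rfl⟩
    rw [h] at hmem
    obtain ⟨k, hk⟩ := hmem
    have hyk : y ^ k = 1 := congrArg Prod.snd hk
    have hxk : x ^ k = x := congrArg Prod.fst hk
    have : (p : ℤ) ∣ k := by
      rw [← hy]
      exact orderOf_dvd_iff_zpow_eq_one.2 hyk
    obtain ⟨t, rfl⟩ := this
    rw [zpow_mul, ← hx] at hxk
    rw [zpow_natCast, pow_orderOf_eq_one, one_zpow] at hxk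
    exact hx1 hxk.symm
  · intro h
    have hxmem : x ∈ (Subgroup.zpowers ((x, y) : H × K)).map (MonoidHom.fst H K) :=
      ⟨(x, y), Subgroup.mem_zpowers _, rfl⟩
    have h1mem : (1 : K) ∈ (Subgroup.zpowers ((x, y) : H × K)).map (MonoidHom.snd H K) :=
      Subgroup.one_mem _
    have : ((x, 1) : H × K) ∈ Subgroup.zpowers ((x, y) : H × K) := by
      rw [h]
      exact Subgroup.mem_prod.2 ⟨hxmem, h1mem⟩
    obtain ⟨k, hk⟩ := this
    have hyk : y ^ k = 1 := congrArg Prod.snd hk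
    have hxk : x ^ k = x := congrArg Prod.fst hk
    have : (p : ℤ) ∣ k := by
      rw [← hy]
      exact orderOf_dvd_iff_zpow_eq_one.2 hyk
    obtain ⟨t, rfl⟩ := this
    rw [zpow_mul, ← hx] at hxk
    rw [zpow_natCast, pow_orderOf_eq_one, one_zpow] at hxk
    exact hx1 hxk.symm

end Coprime

section Nilp

variable {G : Type*} [Group G] [Finite G]

lemma csr_selfnorm_eq_one_iff [Nontrivial G] :
    csr G (fun A : Subgroup G => (Subgroup.normalizer (A : Set _)) = A) = 1 ↔ Group.IsNilpotent G := by
  have htop : (Subgroup.normalizer ((⊤ : Subgroup G) : Set G)) = ⊤ := top_le_iff.1 Subgroup.le_normalizer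
  constructor
  · intro h
    have hnc : NormalizerCondition G := by
      intro A hAlt
      rcases lt_or_eq_of_le (Subgroup.le_normalizer (H := A)) with h' | h'
      · exact h'
      · exfalso
        have := eq_of_csr_eq_one (p := fun A : Subgroup G => (Subgroup.normalizer (A : Set _)) = A) ⊤ htop h A h'.symm
        rw [subgroupConj_iff] at this
        obtain ⟨g, hg⟩ := this
        have h2 : cmap g⁻¹ (⊤ : Subgroup G) = cmap g⁻¹ (cmap g A) := congrArg _ hg
        rw [cmap_top, cmap_cmap, inv_mul_cancel, cmap_one] at h2
        exact absurd h2.symm hAlt.ne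
    exact (isNilpotent_of_finite_tfae (G := G)).out 1 0 |>.1 hnc
  · intro h
    have hnc : NormalizerCondition G := normalizerCondition_of_isNilpotent
    apply csr_singleton (⊤ : Subgroup G)
    intro A
    constructor
    · intro hA
      by_contra hne
      exact (hnc A (lt_of_le_of_ne le_top hne)).ne' hA
    · rintro rfl
      exact htop

end Nilp

end Stmt7Aux

namespace Stmt7Aux

lemma normalizer_bot_eq_top {G : Type*} [Group G] : (Subgroup.normalizer ((⊥ : Subgroup G) : Set G)) = ⊤ :=
  Subgroup.normalizer_eq_top_iff.2 inferInstance

lemma not_selfnorm_bot {G : Type*} [Group G] [Nontrivial G] :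
    ¬ (Subgroup.normalizer ((⊥ : Subgroup G) : Set G)) = ⊥ := by
  rw [normalizer_bot_eq_top]
  intro h
  obtain ⟨x, hx⟩ := exists_ne (1 : G)
  have : x ∈ (⊤ : Subgroup G) := trivial
  rw [h, Subgroup.mem_bot] at this
  exact hx this

lemma selfnorm_top {G : Type*} [Group G] : (Subgroup.normalizer ((⊤ : Subgroup G) : Set G)) = ⊤ :=
  top_le_iff.1 Subgroup.le_normalizer

lemma csr_true_decomp (G : Type*) [Group G] [Finite G] [Nontrivial G] :
    csr G (fun _ => True) =
      csr G (fun A => (Subgroup.normalizer (A : Set _)) = A) + (1 + DCount G) := by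
  have h1 := csr_split (G := G) (fun _ => True) (fun A => (Subgroup.normalizer (A : Set _)) = A)
    (fun g A h => selfnorm_cmap_iff.2 h)
  have h2 : csr G (fun A => True ∧ (Subgroup.normalizer (A : Set _)) = A) = csr G (fun A => (Subgroup.normalizer (A : Set _)) = A) :=
    csr_congr (by simp)
  have h3 := csr_split (G := G) (fun A => True ∧ ¬ (Subgroup.normalizer (A : Set _)) = A) (fun A => A = ⊥)
    (fun g A h => by rw [h, cmap_bot])
  have h4 : csr G (fun A => (True ∧ ¬ (Subgroup.normalizer (A : Set _)) = A) ∧ A = ⊥) = 1 := by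
    apply csr_singleton ⊥
    intro A
    constructor
    · exact fun h => h.2
    · rintro rfl
      exact ⟨⟨trivial, not_selfnorm_bot⟩, rfl⟩
  have h5 : csr G (fun A => (True ∧ ¬ (Subgroup.normalizer (A : Set _)) = A) ∧ ¬ A = ⊥) = DCount G := by
    rw [dcount_eq_csr]
    apply csr_congr
    intro A
    tauto
  beta_reduce at h1 h3
  omega

section ProdDecomp

variable (H K : Type*) [Group H] [Group K] [Finite H] [Finite K]
  [Nontrivial H] [Nontrivial K]

lemma prod_decomp :
    csr H (fun _ => True) * csr K (fun _ => True) =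
      csr H (fun A => (Subgroup.normalizer (A : Set _)) = A) * csr K (fun B => (Subgroup.normalizer (B : Set _)) = B) +
      (1 + csr (H × K) (fun L => (L ≠ ⊥ ∧ (Subgroup.normalizer (L : Set _)) ≠ L) ∧ IsProd L)) := by
  have hp0 := csr_prod (H := H) (K := K) (fun _ => True) (fun _ => True)
  have hp1 : csr (H × K) (fun L => ((fun _ => True) (L.map (MonoidHom.fst H K)) ∧
      (fun _ => True) (L.map (MonoidHom.snd H K))) ∧ IsProd L) =
      csr (H × K) (fun L => IsProd L) := csr_congr (by simp)
  have hp2 := csr_split (G := H × K) (fun L => IsProd L) (fun L => (Subgroup.normalizer (L : Set _)) = L)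
    (fun g L h => selfnorm_cmap_iff.2 h)
  have hp3 : csr (H × K) (fun L => IsProd L ∧ (Subgroup.normalizer (L : Set _)) = L) =
      csr (H × K) (fun L => ((Subgroup.normalizer ((L.map (MonoidHom.fst H K)) : Set _)) = L.map (MonoidHom.fst H K) ∧
        (Subgroup.normalizer ((L.map (MonoidHom.snd H K)) : Set _)) = L.map (MonoidHom.snd H K)) ∧ IsProd L) := by
    apply csr_congr
    intro L
    constructor
    · rintro ⟨hP, hsn⟩
      rw [hP] at hsn
      exact ⟨selfnorm_prod_iff.1 hsn, hP⟩
    · rintro ⟨⟨h1, h2⟩, hP⟩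
      refine ⟨hP, ?_⟩
      rw [hP]
      exact selfnorm_prod_iff.2 ⟨h1, h2⟩
  have hp4 := csr_prod (H := H) (K := K) (fun A => (Subgroup.normalizer (A : Set _)) = A) (fun B => (Subgroup.normalizer (B : Set _)) = B)
  have hp5 := csr_split (G := H × K) (fun L => IsProd L ∧ ¬ (Subgroup.normalizer (L : Set _)) = L) (fun L => L = ⊥)
    (fun g L h => by rw [h, cmap_bot])
  have hp6 : csr (H × K) (fun L => (IsProd L ∧ ¬ (Subgroup.normalizer (L : Set _)) = L) ∧ L = ⊥) = 1 := by
    apply csr_singleton ⊥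
    intro L
    constructor
    · exact fun h => h.2
    · rintro rfl
      exact ⟨⟨isProd_bot, not_selfnorm_bot⟩, rfl⟩
  have hp7 : csr (H × K) (fun L => (IsProd L ∧ ¬ (Subgroup.normalizer (L : Set _)) = L) ∧ ¬ L = ⊥) =
      csr (H × K) (fun L => (L ≠ ⊥ ∧ (Subgroup.normalizer (L : Set _)) ≠ L) ∧ IsProd L) := by
    apply csr_congr
    intro L
    tauto
  beta_reduce at hp0 hp1 hp2 hp5
  omega

lemma dcount_prod_split :
    DCount (H × K) = csr (H × K) (fun L => (L ≠ ⊥ ∧ (Subgroup.normalizer (L : Set _)) ≠ L) ∧ IsProd L) +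
      csr (H × K) (fun L => (L ≠ ⊥ ∧ (Subgroup.normalizer (L : Set _)) ≠ L) ∧ ¬ IsProd L) := by
  rw [dcount_eq_csr]
  exact csr_split _ (fun L => IsProd L) (fun g L h => isProd_cmap g h)

end ProdDecomp

lemma arith (a b u v P E D : ℕ) (heq : (u + 1 + a) * (v + 1 + b) = u * v + 1 + P)
    (hu : 1 ≤ u) (hv : 1 ≤ v) (hD : D = P + E) :
    (a + 2) * (b + 2) - 2 ≤ D ∧
      (D = (a + 2) * (b + 2) - 2 ↔ E = 0 ∧ u = 1 ∧ v = 1) := by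
  have hX : 2 ≤ (a + 2) * (b + 2) := by nlinarith
  have hED : E ≤ D := by omega
  have key : (a + 2) * (b + 2) + (a * (v - 1) + b * (u - 1) + (u - 1) + (v - 1)) =
      D - E + 2 := by
    zify [hu, hv, hED]
    have heqZ : ((u : ℤ) + 1 + a) * (v + 1 + b) = u * v + 1 + P := by exact_mod_cast heq
    have hDZ : (D : ℤ) = P + E := by exact_mod_cast hD
    nlinarith [heqZ, hDZ]
  constructor
  · -- lower bound
    have : (a + 2) * (b + 2) ≤ D + 2 := by omega
    omega
  · constructor
    · intro hDeq
      -- D + 2 = (a+2)(b+2), so the slack terms vanish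
      have hD2 : D + 2 = (a + 2) * (b + 2) := by omega
      have hz : a * (v - 1) + b * (u - 1) + (u - 1) + (v - 1) + E = 0 := by omega
      have hu1 : u = 1 := by omega
      have hv1 : v = 1 := by omega
      have hE0 : E = 0 := by omega
      exact ⟨hE0, hu1, hv1⟩
    · rintro ⟨hE0, hu1, hv1⟩
      subst hE0 hu1 hv1
      simp only [Nat.sub_self, Nat.mul_zero, Nat.zero_mul, Nat.add_zero, Nat.sub_zero] at key
      omega

end Stmt7Aux


open Stmt7Aux in
theorem stmt7 (H K : Type*) [Group H] [Group K] [Finite H] [Finite K]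
    [Nontrivial H] [Nontrivial K] :
    (DCount H + 2) * (DCount K + 2) - 2 ≤ DCount (H × K) ∧
      (DCount (H × K) = (DCount H + 2) * (DCount K + 2) - 2 ↔
        Nat.Coprime (Nat.card H) (Nat.card K) ∧
          Group.IsNilpotent H ∧ Group.IsNilpotent K) := by
  classical
  have hnH := csr_true_decomp H
  have hnK := csr_true_decomp K
  have hprod := prod_decomp H K
  have hsplit := dcount_prod_split H K
  have hu : 1 ≤ csr H (fun A => (Subgroup.normalizer (A : Set _)) = A) := one_le_csr ⟨⊤, selfnorm_top⟩
  have hv : 1 ≤ csr K (fun B => (Subgroup.normalizer (B : Set _)) = B) := one_le_csr ⟨⊤, selfnorm_top⟩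
  have heq : (csr H (fun A => (Subgroup.normalizer (A : Set _)) = A) + 1 + DCount H) *
      (csr K (fun B => (Subgroup.normalizer (B : Set _)) = B) + 1 + DCount K) =
      csr H (fun A => (Subgroup.normalizer (A : Set _)) = A) * csr K (fun B => (Subgroup.normalizer (B : Set _)) = B) + 1 +
      csr (H × K) (fun L => (L ≠ ⊥ ∧ (Subgroup.normalizer (L : Set _)) ≠ L) ∧ IsProd L) := by
    have e1 : csr H (fun _ => True) = csr H (fun A => (Subgroup.normalizer (A : Set _)) = A) + 1 + DCount H := by
      omega
    have e2 : csr K (fun _ => True) = csr K (fun B => (Subgroup.normalizer (B : Set _)) = B) + 1 + DCount K := by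
      omega
    rw [← e1, ← e2, hprod]
    omega
  have harith := arith (DCount H) (DCount K)
    (csr H (fun A => (Subgroup.normalizer (A : Set _)) = A)) (csr K (fun B => (Subgroup.normalizer (B : Set _)) = B))
    (csr (H × K) (fun L => (L ≠ ⊥ ∧ (Subgroup.normalizer (L : Set _)) ≠ L) ∧ IsProd L))
    (csr (H × K) (fun L => (L ≠ ⊥ ∧ (Subgroup.normalizer (L : Set _)) ≠ L) ∧ ¬ IsProd L))
    (DCount (H × K)) heq hu hv hsplit
  refine ⟨harith.1, ?_⟩
  rw [harith.2]
  constructor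
  · rintro ⟨hE0, hu1, hv1⟩
    refine ⟨?_, csr_selfnorm_eq_one_iff.1 hu1, csr_selfnorm_eq_one_iff.1 hv1⟩
    by_contra hnc
    obtain ⟨L, hL1, hL2, hL3⟩ := exists_witness_of_not_coprime (H := H) (K := K) hnc
    have : 1 ≤ csr (H × K) (fun L => (L ≠ ⊥ ∧ (Subgroup.normalizer (L : Set _)) ≠ L) ∧ ¬ IsProd L) :=
      one_le_csr ⟨L, ⟨hL1, hL2⟩, hL3⟩
    omega
  · rintro ⟨hco, hnilH, hnilK⟩
    refine ⟨?_, csr_selfnorm_eq_one_iff.2 hnilH, csr_selfnorm_eq_one_iff.2 hnilK⟩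
    apply csr_eq_zero
    rintro L ⟨-, hL⟩
    exact hL (isProd_of_coprime hco L)
end

section
/- Let G be a finite nonabelian group with nontrivial center Z(G). Then D(G) - D(Z(G)) ≥ 3. -/
open Pointwise

/-!
Subgroups of the center `Z` are normal, so every proper nontrivial subgroup of `Z` is a
non-self-normalizing subgroup of `G` forming a conjugacy class on its own, and these classes lie
strictly below `Z`. Three further classes come from `Z` itself (proper, as `G` is nonabelian) and
two subgroups `S₂, S₃` not strictly below `Z`; as `G` is nonabelian, `G/Z` is not cyclic.

If some `g ∉ Z` has `Z ⊄ ⟨g⟩`, take `S₃ = ⟨g⟩`, which `Z` normalizes, and for `S₂` the preimage of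
a nontrivial non-self-normalizing subgroup of `G/Z`; the conjugates of `S₂` contain `Z`, so they
miss `S₃`. Otherwise every `⟨g⟩` with `g ∉ Z` contains `Z`, which forces `G` to be a `p`-group;
then `S₂, S₃` are the preimages of two distinct maximal subgroups of `G/Z`, both normal.
-/

open Subgroup

section Conjugacy

variable {G : Type*} [Group G]

theorem subgroupConj_iff {H K : Subgroup G} :
    SubgroupConj H K ↔ ∃ g : G, K = MulAut.conj g • H :=
  Iff.rfl

theorem subgroupConj_equivalence : Equivalence (SubgroupConj (G := G)) where
  refl H := subgroupConj_iff.mpr ⟨1, by rw [map_one, one_smul]⟩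
  symm := by
    simp only [subgroupConj_iff]
    rintro H K ⟨g, rfl⟩
    exact ⟨g⁻¹, by rw [map_inv, inv_smul_smul]⟩
  trans := by
    simp only [subgroupConj_iff]
    rintro H K L ⟨g, rfl⟩ ⟨h, rfl⟩
    exact ⟨h * g, by rw [map_mul, mul_smul]⟩

theorem SubgroupConj.symm {H K : Subgroup G} (h : SubgroupConj H K) : SubgroupConj K H :=
  subgroupConj_equivalence.symm h

theorem SubgroupConj.eq_of_normal_s12 {H K : Subgroup G} [H.Normal] (h : SubgroupConj H K) :
    K = H := by
  obtain ⟨g, rfl⟩ := subgroupConj_iff.mp h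
  exact Normal.conj_smul_eq_self g H

theorem SubgroupConj.le_of_normal_le {N H K : Subgroup G} [N.Normal] (hNH : N ≤ H)
    (h : SubgroupConj H K) : N ≤ K := by
  obtain ⟨g, rfl⟩ := subgroupConj_iff.mp h
  calc N = MulAut.conj g • N := (Normal.conj_smul_eq_self g N).symm
    _ ≤ MulAut.conj g • H := pointwise_smul_le_pointwise_smul_iff.mpr hNH

end Conjugacy

namespace Subgroup

variable {G : Type*} [Group G]

theorem normal_of_le_center {H : Subgroup G} (h : H ≤ center G) : H.Normal :=
  ⟨fun x hx g => by rwa [mem_center_iff.mp (h hx) g, mul_inv_cancel_right]⟩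

theorem normalizer_ne_self_of_normal {H : Subgroup G} [H.Normal] (h : H ≠ ⊤) :
    normalizer (H : Set G) ≠ H := by
  rw [normalizer_eq_top]
  exact h.symm

theorem lt_comap_mk' (N : Subgroup G) [N.Normal] {K : Subgroup (G ⧸ N)} (hK : K ≠ ⊥) :
    N < K.comap (QuotientGroup.mk' N) :=
  calc N = (⊥ : Subgroup (G ⧸ N)).comap (QuotientGroup.mk' N) := by
        rw [MonoidHom.comap_bot, QuotientGroup.ker_mk']
    _ < K.comap (QuotientGroup.mk' N) :=
        (comap_lt_comap_of_surjective (QuotientGroup.mk'_surjective N)).mpr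
          (bot_lt_iff_ne_bot.mpr hK)

theorem normalizer_comap_ne_self {H : Type*} [Group H] {f : G →* H}
    (hf : Function.Surjective f) {K : Subgroup H} (hK : normalizer (K : Set H) ≠ K) :
    normalizer ((K.comap f : Subgroup G) : Set G) ≠ K.comap f := by
  rw [← comap_normalizer_eq_of_surjective K hf]
  exact (comap_injective hf).ne hK

end Subgroup

section Counting

variable {G : Type*} [Group G]

abbrev NonSelfNormalizing (G : Type*) [Group G] :=
  {H : Subgroup G // H ≠ ⊥ ∧ normalizer (H : Set G) ≠ H}

abbrev DClass (G : Type*) [Group G] :=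
  Quot fun H K : NonSelfNormalizing G => SubgroupConj H.1 K.1

theorem DClass.mk_eq_mk_iff {H K : NonSelfNormalizing G} :
    (Quot.mk _ H : DClass G) = Quot.mk _ K ↔ SubgroupConj H.1 K.1 :=
  ⟨fun h => ((subgroupConj_equivalence.comap Subtype.val).eqvGen_iff).mp (Quot.eqvGen_exact h),
    fun h => Quot.sound h⟩

theorem NonSelfNormalizing.ne_top (H : NonSelfNormalizing G) : H.1 ≠ ⊤ :=
  fun h => H.2.2 (by rw [h, normalizer_eq_top])

/-- Subgroups of a central subgroup `A` are normal in `G`, so `D(A)` injects into `D(G)`, with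
image the classes strictly below `A`. -/
theorem dCount_add_le_of_le_center [Finite G] {A : Subgroup G} (hA : A ≤ center G)
    {n : ℕ} (S : Fin n → NonSelfNormalizing G) (hSA : ∀ i, ¬ (S i).1 < A)
    (hS : ∀ i j, SubgroupConj (S i).1 (S j).1 → i = j) : DCount A + n ≤ DCount G := by
  have hnormal (H : Subgroup A) : (H.map A.subtype).Normal :=
    normal_of_le_center ((map_subtype_le H).trans hA)
  have hnormalA (H : Subgroup A) : H.Normal := by
    simpa [comap_map_eq_self_of_injective A.subtype_injective] using (hnormal H).comap A.subtype
  have hmap_inj : Function.Injective (map A.subtype) := map_injective A.subtype_injective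
  have hlt (H : NonSelfNormalizing A) : H.1.map A.subtype < A := by
    refine (map_subtype_le _).lt_of_ne fun h => H.ne_top (hmap_inj ?_)
    rw [h, ← MonoidHom.range_eq_map, range_subtype]
  let ι (H : NonSelfNormalizing A) : NonSelfNormalizing G :=
    ⟨H.1.map A.subtype, (map_eq_bot_iff_of_injective _ A.subtype_injective).not.mpr H.2.1,
      normalizer_ne_self_of_normal (ne_top_of_lt (hlt H))⟩
  let F : DClass A ⊕ Fin n → DClass G :=
    Sum.elim (Quot.lift (fun H => Quot.mk _ (ι H)) fun H K h => by
      rw [Subtype.ext h.eq_of_normal_s12]) fun i => Quot.mk _ (S i)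
  have hF : Function.Injective F := by
    rintro (x | i) (y | j) h
    · induction x using Quot.ind with | mk H => induction y using Quot.ind with | mk K =>
      replace h : SubgroupConj (ι H).1 (ι K).1 := DClass.mk_eq_mk_iff.mp h
      rw [Subtype.ext (hmap_inj h.eq_of_normal_s12).symm]
    · induction x using Quot.ind with | mk H =>
      exact absurd ((DClass.mk_eq_mk_iff.mp h).eq_of_normal_s12 ▸ hlt H) (hSA j)
    · induction y using Quot.ind with | mk K =>
      exact absurd ((DClass.mk_eq_mk_iff.mp h).symm.eq_of_normal_s12 ▸ hlt K) (hSA i)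
    · rw [hS i j (DClass.mk_eq_mk_iff.mp h)]
  have hcard := Nat.card_le_card_of_injective F hF
  rwa [Nat.card_sum, Nat.card_fin] at hcard

theorem dCount_center_add_three_le [Finite G] (hZ : center G ≠ ⊥) (hZt : center G ≠ ⊤)
    {S₂ S₃ : Subgroup G} (h2 : center G < S₂) (h2n : normalizer (S₂ : Set G) ≠ S₂)
    (h3 : ¬ S₃ < center G) (h3Z : S₃ ≠ center G) (h3n : normalizer (S₃ : Set G) ≠ S₃)
    (h23 : ¬ SubgroupConj S₂ S₃) :
    DCount (center G) + 3 ≤ DCount G := by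
  have h3b : S₃ ≠ ⊥ := by
    rintro rfl
    exact h3 (bot_lt_iff_ne_bot.mpr hZ)
  have hZ2 : ¬ SubgroupConj (center G) S₂ := fun h => h2.ne' h.eq_of_normal_s12
  have hZ3 : ¬ SubgroupConj (center G) S₃ := fun h => h3Z h.eq_of_normal_s12
  refine dCount_add_le_of_le_center le_rfl
    ![⟨_, hZ, normalizer_ne_self_of_normal hZt⟩, ⟨S₂, (bot_le.trans_lt h2).ne', h2n⟩,
      ⟨S₃, h3b, h3n⟩] ?_ ?_
  · intro i
    fin_cases i
    exacts [lt_irrefl _, h2.not_gt, h3]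
  · intro i j h
    fin_cases i <;> fin_cases j
    all_goals first
      | rfl
      | exact absurd h ‹_›
      | exact absurd h.symm ‹_›

end Counting

section NotCyclic

variable {X : Type*} [Group X]

theorem zpowers_ne_top_of_not_isCyclic (hX : ¬ IsCyclic X) (x : X) : zpowers x ≠ ⊤ :=
  fun h => hX (isCyclic_iff_exists_zpowers_eq_top.mpr ⟨x, h⟩)

theorem IsCoatom.ne_bot_of_not_isCyclic {M : Subgroup X} (hM : IsCoatom M) (hX : ¬ IsCyclic X) :
    M ≠ ⊥ := by
  rintro rfl
  have : Nontrivial X := nontrivial_iff.mp ⟨⊥, ⊤, hM.1⟩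
  obtain ⟨x, hx⟩ := exists_ne (1 : X)
  exact zpowers_ne_top_of_not_isCyclic hX x
    (hM.2 _ (bot_lt_iff_ne_bot.mpr (zpowers_ne_bot.mpr hx)))

theorem exists_isCoatom_ne [Finite X] (hX : ¬ IsCyclic X) :
    ∃ M₁ M₂ : Subgroup X, IsCoatom M₁ ∧ IsCoatom M₂ ∧ M₁ ≠ M₂ := by
  have : Nontrivial X := not_subsingleton_iff_nontrivial.mp fun _ => hX isCyclic_of_subsingleton
  obtain ⟨M₁, hM₁, -⟩ := (eq_top_or_exists_le_coatom (⊥ : Subgroup X)).resolve_left bot_ne_top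
  obtain ⟨x, hx⟩ := SetLike.exists_of_lt hM₁.1.lt_top
  obtain ⟨M₂, hM₂, hxM₂⟩ := (eq_top_or_exists_le_coatom (zpowers x)).resolve_left
    (zpowers_ne_top_of_not_isCyclic hX x)
  exact ⟨M₁, M₂, hM₁, hM₂, fun h => hx.2 (h ▸ hxM₂ (mem_zpowers x))⟩

/-- Let `P` be a Sylow subgroup for the smallest prime. If `P` is cyclic, Burnside's transfer
theorem gives it a normal complement, which is proper and nontrivial. Otherwise a nontrivial
element of the center of `P` generates a subgroup that `P` normalizes but does not lie in. -/
theorem exists_ne_bot_normalizer_ne_self [Finite X] (hX : ¬ IsCyclic X) :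
    ∃ K : Subgroup X, K ≠ ⊥ ∧ normalizer (K : Set X) ≠ K := by
  have : Nontrivial X := not_subsingleton_iff_nontrivial.mp fun _ => hX isCyclic_of_subsingleton
  have : Fact (Nat.card X).minFac.Prime := ⟨Nat.minFac_prime Finite.one_lt_card.ne'⟩
  obtain ⟨P⟩ : Nonempty (Sylow (Nat.card X).minFac X) := inferInstance
  have hPbot : (P : Subgroup X) ≠ ⊥ := P.ne_bot_of_dvd_card (Nat.minFac_dvd _)
  by_cases hPc : IsCyclic P
  · obtain ⟨K, hK, hKn⟩ : ∃ K : Subgroup X, K.IsComplement' P ∧ K.Normal :=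
      ⟨_, IsCyclic.isComplement' rfl hPc, MonoidHom.normal_ker _⟩
    refine ⟨K, fun h => ?_, normalizer_ne_self_of_normal fun h => ?_⟩
    · rw [h, isComplement'_bot_left] at hK
      rw [hK] at hPc
      exact hX (topEquiv.isCyclic.mp hPc)
    · rw [h, isComplement'_top_left] at hK
      exact hPbot hK
  · have : Nontrivial P := (nontrivial_iff_ne_bot _).mpr hPbot
    have := P.isPGroup'.center_nontrivial
    obtain ⟨z, hz⟩ := exists_ne (1 : center P)
    obtain ⟨x, hxP, hxc, hx1⟩ :
        ∃ x ∈ (P : Subgroup X), x ∈ centralizer (P : Set X) ∧ x ≠ 1 :=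
      ⟨_, (z : P).2, fun h hh => congrArg Subtype.val (mem_center_iff.mp z.2 ⟨h, hh⟩),
        fun h => hz (Subtype.ext (Subtype.ext h))⟩
    refine ⟨zpowers x, zpowers_ne_bot.mpr hx1, fun h => hPc ?_⟩
    have hPx : (P : Subgroup X) ≤ zpowers x :=
      h ▸ (le_centralizer_iff.mpr (zpowers_le.mpr hxc)).trans (centralizer_le_normalizer _)
    rw [le_antisymm hPx (zpowers_le.mpr hxP)]
    infer_instance

end NotCyclic

theorem exists_isPGroup_of_forall_le_zpowers {G : Type*} [Group G] [Finite G] {Z : Subgroup G}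
    (hZ : Z ≠ ⊥) (hZt : Z ≠ ⊤) (h : ∀ g ∉ Z, Z ≤ zpowers g) :
    ∃ p, p.Prime ∧ IsPGroup p G := by
  have hp : Z.index.minFac.Prime := Nat.minFac_prime (index_eq_one.not.mpr hZt)
  have := Fact.mk hp
  obtain ⟨P⟩ : Nonempty (Sylow Z.index.minFac G) := inferInstance
  obtain ⟨g, hgP, hgZ⟩ : ∃ g ∈ (P : Subgroup G), g ∉ Z := by
    by_contra! hPZ
    exact P.not_dvd_index ((Nat.minFac_dvd _).trans (index_dvd_of_le hPZ))
  have hZp : IsPGroup Z.index.minFac Z := P.isPGroup'.to_le ((h g hgZ).trans (zpowers_le.mpr hgP))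
  refine ⟨_, hp, IsPGroup.of_card
    (Nat.eq_prime_pow_of_unique_prime_dvd Nat.card_pos.ne' fun {q} hq hqG => ?_)⟩
  have := Fact.mk hq
  obtain ⟨x, hx⟩ := exists_prime_orderOf_dvd_card' q hqG
  have hxq : IsPGroup q (zpowers x) :=
    IsPGroup.of_card (n := 1) (by rw [Nat.card_zpowers, hx, pow_one])
  -- `zpowers x` and `Z` are comparable, so they meet nontrivially.
  have hW : zpowers x ⊓ Z ≠ ⊥ := by
    by_cases hxZ : x ∈ Z
    · rw [inf_eq_left.mpr (zpowers_le.mpr hxZ), Ne, zpowers_eq_bot, ← orderOf_eq_one_iff, hx]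
      exact hq.one_lt.ne'
    · rwa [inf_eq_right.mpr (h x hxZ)]
  by_contra hqp
  exact hW (disjoint_self.mp (IsPGroup.disjoint_of_ne q _ hqp _ _ hxq.to_inf_left hZp.to_inf_right))

section Center

variable {G : Type*} [Group G] [Finite G]

theorem dCount_center_add_three_le_of_not_le_zpowers (hZ : center G ≠ ⊥) (hZt : center G ≠ ⊤)
    (hQ : ¬ IsCyclic (G ⧸ center G)) {g : G} (hg : g ∉ center G)
    (hZg : ¬ center G ≤ zpowers g) :
    DCount (center G) + 3 ≤ DCount G := by
  obtain ⟨K, hK, hKn⟩ := exists_ne_bot_normalizer_ne_self hQ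
  have h2 := lt_comap_mk' _ hK
  exact dCount_center_add_three_le hZ hZt h2
    (normalizer_comap_ne_self (QuotientGroup.mk'_surjective _) hKn) (S₃ := zpowers g)
    (fun h => hg (h.le (mem_zpowers g))) (fun h => hg (h ▸ mem_zpowers g))
    (fun h => hZg (h ▸ center_le_normalizer _)) (fun h => hZg (h.le_of_normal_le h2.le))

theorem dCount_center_add_three_le_of_isNilpotent [Group.IsNilpotent G] (hZ : center G ≠ ⊥)
    (hZt : center G ≠ ⊤) (hQ : ¬ IsCyclic (G ⧸ center G)) :
    DCount (center G) + 3 ≤ DCount G := by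
  obtain ⟨M₁, M₂, hM₁, hM₂, hne⟩ := exists_isCoatom_ne hQ
  have hcond := Group.normalizerCondition_of_isNilpotent (G := G ⧸ center G)
  have := NormalizerCondition.normal_of_coatom M₁ hcond hM₁
  have := NormalizerCondition.normal_of_coatom M₂ hcond hM₂
  have hsurj := QuotientGroup.mk'_surjective (center G)
  have h3 := lt_comap_mk' _ (hM₂.ne_bot_of_not_isCyclic hQ)
  exact dCount_center_add_three_le hZ hZt (lt_comap_mk' _ (hM₁.ne_bot_of_not_isCyclic hQ))
    (normalizer_comap_ne_self hsurj (normalizer_ne_self_of_normal hM₁.1)) (lt_asymm h3) h3.ne'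
    (normalizer_comap_ne_self hsurj (normalizer_ne_self_of_normal hM₂.1))
    fun h => hne (comap_injective hsurj h.eq_of_normal_s12).symm

end Center

theorem stmt12 (G : Type*) [Group G] [Finite G] (hna : ¬ ∀ a b : G, a * b = b * a)
    (hz : Subgroup.center G ≠ ⊥) :
    DCount ↥(Subgroup.center G) + 3 ≤ DCount G := by
  have hZt : center G ≠ ⊤ := fun h => hna (center_eq_top_iff.mp h).is_comm.comm
  have hQ : ¬ IsCyclic (G ⧸ center G) := fun _ =>
    hna ((QuotientGroup.mk' _).isMulCommutative_of_isCyclic_of_ker_le_center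
      (QuotientGroup.ker_mk' _).le).is_comm.comm
  by_cases h : ∃ g ∉ center G, ¬ center G ≤ zpowers g
  · obtain ⟨g, hg, hZg⟩ := h
    exact dCount_center_add_three_le_of_not_le_zpowers hz hZt hQ hg hZg
  · push Not at h
    obtain ⟨p, hp, hpG⟩ := exists_isPGroup_of_forall_le_zpowers hz hZt h
    have := Fact.mk hp
    have := hpG.isNilpotent
    exact dCount_center_add_three_le_of_isNilpotent hz hZt hQ
end
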